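/- Define F(y) := (1/2)(1+y)² − (2/(3+√(π√3))²)·(2 + √(2 − 2√(1−y²)) + √(2πy))² for y ∈ (0,1). Then F(y) > 0 for all y ∈ (0, 0.11]. (In the paper this is proved by showing F is strictly decreasing on (0, 0.2] and F(0.11) ≥ 0.0075.) -/
import Mathlib


/-- The auxiliary function used to prove positivity of `J₂` on the degenerate region. -/
noncomputable def F12 (y : ℝ) : ℝ :=
  (1 / 2) * (1 + y) ^ 2
    - (2 / (3 + Real.sqrt (Real.pi * Real.sqrt 3)) ^ 2)
      * (2 + Real.sqrt (2 - 2 * Real.sqrt (1 - y ^ 2)) + Real.sqrt (2 * Real.pi * y)) ^ 2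

set_option maxHeartbeats 1000000 in
/-- `F(y) > 0` for all `y ∈ (0, 0.11]`. -/
theorem statement12 (y : ℝ) (hy : 0 < y) (hy' : y ≤ 0.11) : 0 < F12 y := by
  unfold F12
  set a := Real.sqrt (Real.pi * Real.sqrt 3) with ha
  set t := Real.sqrt (2 - 2 * Real.sqrt (1 - y ^ 2)) with ht
  set u := Real.sqrt (2 * Real.pi * y) with hu
  have hpi1 : 3.14 < Real.pi := by linarith [Real.pi_gt_d6]
  have hpi2 : Real.pi < 3.15 := Real.pi_lt_d2
  have hs3 : (1.73 : ℝ) ≤ Real.sqrt 3 := by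
    rw [show (1.73:ℝ) = Real.sqrt (1.73^2) from (Real.sqrt_sq (by norm_num)).symm]
    exact Real.sqrt_le_sqrt (by norm_num)
  have ha2 : (2.33 : ℝ) ≤ a := by
    rw [ha, show (2.33:ℝ) = Real.sqrt (2.33^2) from (Real.sqrt_sq (by norm_num)).symm]
    exact Real.sqrt_le_sqrt (by nlinarith)
  have ha0 : (0:ℝ) < 3 + a := by linarith
  have hy2 : y^2 ≤ 0.0121 := by nlinarith
  have hsq : (1 : ℝ) - 0.502 * y^2 ≤ Real.sqrt (1 - y^2) := by
    rw [show (1:ℝ) - 0.502*y^2 = Real.sqrt ((1-0.502*y^2)^2) from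
      (Real.sqrt_sq (by nlinarith)).symm]
    exact Real.sqrt_le_sqrt (by nlinarith)
  have ht0 : 0 ≤ t := Real.sqrt_nonneg _
  have htb : t ≤ 1.002 * y := by
    rw [ht, show (1.002:ℝ)*y = Real.sqrt ((1.002*y)^2) from
      (Real.sqrt_sq (by positivity)).symm]
    exact Real.sqrt_le_sqrt (by nlinarith)
  have hu0 : 0 ≤ u := Real.sqrt_nonneg _
  have hub : u^2 ≤ 6.3 * y := by
    rw [hu, Real.sq_sqrt (by positivity)]; nlinarith
  have hq : 6.3 * y < (0.665 + 1.663 * y)^2 := by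
    nlinarith [mul_nonneg (by linarith : (0:ℝ) ≤ 0.11 - y)
      (by nlinarith : (0:ℝ) ≤ 4.08821 - 2.765569*(0.11+y))]
  have hL : u < 0.665 + 1.663 * y := by
    nlinarith [hu0, hub, hq]
  have key : 2 + t + u < (1 + y) * (3 + a) / 2 := by nlinarith
  have hS0 : (0:ℝ) ≤ 2 + t + u := by linarith
  have hden : (0:ℝ) < (3 + a)^2 := by positivity
  have hsqlt : (2 + t + u)^2 < ((1 + y) * (3 + a) / 2)^2 := by
    rw [pow_two, pow_two]
    exact mul_self_lt_mul_self hS0 key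
  rw [sub_pos, div_mul_eq_mul_div, div_lt_iff₀ hden]
  nlinarith [hsqlt]
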